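/- arXiv:2407.02802 — 3 statements merged into one kernel-verified Lean document; each statement's English description precedes it below -/
import Mathlib

section
/- Let θ₁, ..., θₙ be real numbers in the open interval (-π, 0). Then sin(θ₁) + sin(θ₂) + ... + sin(θₙ) ≤ -|sin(θ₁ + θ₂ + ... + θₙ)|. -/
open Real

lemma abs_sin_add_le (a b : ℝ) :
    |Real.sin (a + b)| ≤ |Real.sin a| + |Real.sin b| := by
  rw [Real.sin_add]
  refine (abs_add_le _ _).trans ?_
  rw [abs_mul, abs_mul]
  have h1 := Real.abs_cos_le_one a
  have h2 := Real.abs_cos_le_one b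
  have h3 := abs_nonneg (Real.sin a)
  have h4 := abs_nonneg (Real.sin b)
  nlinarith

lemma abs_sin_sum_le {ι : Type*} (s : Finset ι) (x : ι → ℝ) :
    |Real.sin (∑ i ∈ s, x i)| ≤ ∑ i ∈ s, |Real.sin (x i)| := by
  induction s using Finset.cons_induction with
  | empty => simp
  | cons a s ha ih =>
    rw [Finset.sum_cons, Finset.sum_cons]
    exact (abs_sin_add_le _ _).trans (by linarith)

theorem stmt_1 (n : ℕ) (hn : 0 < n) (θ : Fin n → ℝ)
    (hθ : ∀ i, θ i ∈ Set.Ioo (-π) 0) :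
    ∑ i, Real.sin (θ i) ≤ -|Real.sin (∑ i, θ i)| := by
  have h : ∑ i, Real.sin (θ i) = -∑ i, |Real.sin (θ i)| := by
    rw [← Finset.sum_neg_distrib]
    refine Finset.sum_congr rfl fun i _ => ?_
    have hi := hθ i
    have : Real.sin (θ i) ≤ 0 := by
      have := Real.sin_nonneg_of_nonneg_of_le_pi (x := -θ i)
        (by linarith [hi.2]) (by linarith [hi.1])
      rw [Real.sin_neg] at this; linarith
    rw [abs_of_nonpos this]; ring
  rw [h, neg_le_neg_iff]
  exact abs_sin_sum_le _ _
end

section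
/- Let f(z) = (α z² + β z + 1)/(z² + β z + α) with α, β real, and suppose the denominator is nonzero at e^{jω_p}. Then the phase change rate satisfies θ_f'(ω_p) = (2(α² - 1) + 2(α - 1)β cos ω_p) / |e^{j2ω_p} + β e^{jω_p} + α|². -/
open Real Complex

/-!
On the unit circle `conj z = z⁻¹`, so for real `α, β` the numerator of the all-pass section is
the mirror image of its denominator: `αz² + βz + 1 = z² · conj (z² + βz + α)`. Clearing
denominators with `|den|² = den · conj den` then turns `j z f'(z) / f(z)` into `j` times a real
number, in which `z + z⁻¹ = 2 cos ω`.
-/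

open ComplexConjugate

section AllPass

variable (α β : ℝ) {z : ℂ}

lemma allpass_num_eq_mul_conj_den (hz : ‖z‖ = 1) :
    (α : ℂ) * z ^ 2 + β * z + 1 = z ^ 2 * conj (z ^ 2 + β * z + α) := by
  have hz0 : z ≠ 0 := ne_zero_of_norm_ne_zero (by simp [hz])
  simp only [map_add, map_mul, map_pow, conj_ofReal, ← inv_eq_conj hz]
  field_simp
  ring

/-- At a zero of the denominator both sides vanish, by the convention `x / 0 = 0`. -/
lemma allpass_logDeriv_eq (hz : ‖z‖ = 1) :
    I * z * (((2 * α * z + β) * (z ^ 2 + β * z + α) - (α * z ^ 2 + β * z + 1) * (2 * z + β))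
        / (z ^ 2 + β * z + α) ^ 2) / ((α * z ^ 2 + β * z + 1) / (z ^ 2 + β * z + α))
      = ((2 * (α ^ 2 - 1) + 2 * (α - 1) * β * z.re) / ‖z ^ 2 + β * z + α‖ ^ 2 : ℝ) * I := by
  have hz0 : z ≠ 0 := ne_zero_of_norm_ne_zero (by simp [hz])
  have hnorm : ((‖z ^ 2 + β * z + α‖ ^ 2 : ℝ) : ℂ)
      = (z ^ 2 + β * z + α) * ((α * z ^ 2 + β * z + 1) / z ^ 2) := by
    rw [allpass_num_eq_mul_conj_den α β hz, mul_div_cancel_left₀ _ (pow_ne_zero 2 hz0), mul_conj',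
      ofReal_pow]
  have hre : (z.re : ℂ) = (z + z⁻¹) / 2 := by
    rw [inv_eq_conj hz, add_conj]; push_cast; ring
  push_cast [hnorm, hre]
  field_simp
  ring

end AllPass

theorem stmt_11_general (α β : ℝ) (ωp : ℝ) :
    (let z : ℂ := Complex.exp (ωp * Complex.I)
     let num : ℂ := α * z ^ 2 + β * z + 1
     let den : ℂ := z ^ 2 + β * z + α
     let f' : ℂ := ((2 * α * z + β) * den - num * (2 * z + β)) / den ^ 2
     (Complex.I * z * f' / (num / den)).im) =
      (2 * (α ^ 2 - 1) + 2 * (α - 1) * β * Real.cos ωp) /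
        (‖(Complex.exp (2 * ωp * Complex.I) + β * Complex.exp (ωp * Complex.I) + α)‖) ^ 2 := by
  have hsq : Complex.exp (2 * ωp * I) = Complex.exp (ωp * I) ^ 2 := by
    rw [← Complex.exp_nat_mul]; ring_nf
  dsimp only
  rw [hsq, ← exp_ofReal_mul_I_re ωp,
    allpass_logDeriv_eq α β (norm_exp_ofReal_mul_I ωp), mul_I_im, ofReal_re]

/-- Phase change rate of the generic second-order all-pass
`f(z) = (αz² + βz + 1)/(z² + βz + α)`, where
`θ_f'(ω) = Im (j e^{jω} f'(e^{jω})/f(e^{jω}))` and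
`f'(z) = ((2αz + β)(z² + βz + α) - (αz² + βz + 1)(2z + β))/(z² + βz + α)²`. -/
theorem stmt_11 (α β : ℝ) (ωp : ℝ)
    (hden : Complex.exp (ωp * Complex.I) ^ 2 + β * Complex.exp (ωp * Complex.I) + α ≠ 0) :
    (let z : ℂ := Complex.exp (ωp * Complex.I)
     let num : ℂ := α * z ^ 2 + β * z + 1
     let den : ℂ := z ^ 2 + β * z + α
     let f' : ℂ := ((2 * α * z + β) * den - num * (2 * z + β)) / den ^ 2
     (Complex.I * z * f' / (num / den)).im) =
      (2 * (α ^ 2 - 1) + 2 * (α - 1) * β * Real.cos ωp) /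
        (‖(Complex.exp (2 * ωp * Complex.I) + β * Complex.exp (ωp * Complex.I) + α)‖) ^ 2 :=
  stmt_11_general α β ωp
end

section
/- Let f(z) = (α z² + β z + 1)/(z² + β z + α), D(ω) = |e^{j2ω} + β e^{jω} + α|², and ω_p ∈ (0, π) with D(ω_p) ≠ 0. Then θ_f'(ω_p) = sin(θ_f(ω_p)) cos(ω_p)/sin(ω_p) + 2 sin²(ω_p)(α² - 1)/D(ω_p), where sin(θ_f(ω_p)) = Im f(e^{jω_p}). -/
/-! On the unit circle `z̄ = z⁻¹`, so with `W = z² + βz + α` the numerator of the all-pass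
function is the reciprocal polynomial `αz² + βz + 1 = z² W̄` and `f = z² W̄ / W`. Multiplying
through by `W̄` puts both `j z f'/f` and `f` over the real denominator `D = |W|²`:
`j z f'/f = j (2(α² - 1) + (α - 1)β(z + z̄)) / D`, whence
`θ_f' = 2((α² - 1) + (α - 1)β cos ω) / D`, and `Im (f D) = Im (W̄ (αz² + βz + 1))` gives
`sin θ_f = 2 sin ω ((α - 1)β + (α² - 1) cos ω) / D`. The identity is then `cos² ω + sin² ω = 1`. -/

open Real Complex ComplexConjugate

section AllPass

variable {α β : ℝ} {z : ℂ}

lemma mul_conj_eq_one_of_norm_eq_one (hz : ‖z‖ = 1) : z * conj z = 1 := by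
  rw [mul_conj', hz]; norm_num

lemma allPass_num_eq_sq_mul_conj_den (hz : ‖z‖ = 1) :
    α * z ^ 2 + β * z + 1 = z ^ 2 * conj (z ^ 2 + β * z + α) := by
  simp only [map_add, map_mul, map_pow, conj_ofReal]
  linear_combination (-1 - z * conj z - β * z) * mul_conj_eq_one_of_norm_eq_one hz

lemma im_allPass (hz : ‖z‖ = 1) :
    ((α * z ^ 2 + β * z + 1) / (z ^ 2 + β * z + α)).im
      = 2 * z.im * ((α - 1) * β + (α ^ 2 - 1) * z.re) / normSq (z ^ 2 + β * z + α) := by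
  have hprod : (α * z ^ 2 + β * z + 1) * conj (z ^ 2 + β * z + α)
      = (2 * α + β ^ 2 : ℝ) + α ^ 2 * z ^ 2 + 2 * α * β * z + 2 * β * conj z + conj z ^ 2 := by
    simp only [map_add, map_mul, map_pow, conj_ofReal]
    push_cast
    linear_combination (α * (z * conj z + 1) + α * β * z + β * conj z + β ^ 2)
      * mul_conj_eq_one_of_norm_eq_one hz
  rw [div_eq_mul_inv, inv_def, ← mul_assoc, hprod, im_mul_ofReal]
  simp only [pow_two, add_im, mul_im, mul_re, ofReal_re, ofReal_im, conj_re, conj_im, re_ofNat,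
    im_ofNat]
  ring

lemma im_I_mul_logDeriv_allPass (hz : ‖z‖ = 1) (hden : z ^ 2 + β * z + α ≠ 0) :
    (I * z * (((2 * α * z + β) * (z ^ 2 + β * z + α) - (α * z ^ 2 + β * z + 1) * (2 * z + β))
        / (z ^ 2 + β * z + α) ^ 2) / ((α * z ^ 2 + β * z + 1) / (z ^ 2 + β * z + α))).im
      = 2 * ((α ^ 2 - 1) + (α - 1) * β * z.re) / normSq (z ^ 2 + β * z + α) := by
  have h1 := mul_conj_eq_one_of_norm_eq_one hz
  have hz0 : z ≠ 0 := left_ne_zero_of_mul_eq_one h1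
  have hden_conj : conj (z ^ 2 + β * z + α) ≠ 0 := (map_ne_zero _).mpr hden
  have hnum : (2 * α + β * conj z) * (z ^ 2 + β * z + α)
        - (2 * z ^ 2 + β * z) * conj (z ^ 2 + β * z + α)
      = ((2 * ((α ^ 2 - 1) + (α - 1) * β * z.re) : ℝ) : ℂ) := by
    have hre := add_conj z
    simp only [map_add, map_mul, map_pow, conj_ofReal]
    push_cast at hre ⊢
    linear_combination (-β * (z + conj z) - 2 * (z * conj z + 1)) * h1 + (α - 1) * β * hre
  calc _ = (I * (((2 * α + β * conj z) * (z ^ 2 + β * z + α)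
          - (2 * z ^ 2 + β * z) * conj (z ^ 2 + β * z + α))
          / ((z ^ 2 + β * z + α) * conj (z ^ 2 + β * z + α)))).im := by
        congr 1
        rw [allPass_num_eq_sq_mul_conj_den hz]
        generalize conj (z ^ 2 + β * z + α) = Wb at hden_conj ⊢
        generalize conj z = zb at h1 ⊢
        generalize z ^ 2 + β * z + α = W at hden ⊢
        field_simp
        linear_combination -β * W * h1
    _ = _ := by rw [hnum, mul_conj, ← ofReal_div, I_mul_im, ofReal_re]

end AllPass

/-- For the second-order all-pass `f(z) = (αz² + βz + 1)/(z² + βz + α)` with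
`D(ω) = |e^{j2ω} + βe^{jω} + α|²` and `ω_p ∈ (0, π)` with `D(ω_p) ≠ 0`:
`θ_f'(ω_p) = sin(θ_f(ω_p)) cos ω_p / sin ω_p + 2 sin² ω_p (α² - 1)/D(ω_p)`,
where `sin(θ_f(ω_p)) = Im f(e^{jω_p})` and `θ_f'` is computed from
`Im (j e^{jω} f'(e^{jω})/f(e^{jω}))`. -/
theorem stmt_12 (α β : ℝ) (ωp : ℝ) (hωp : ωp ∈ Set.Ioo 0 π)
    (hD : ‖Complex.exp (2 * ωp * Complex.I) + β * Complex.exp (ωp * Complex.I) + α‖ ^ 2 ≠ 0) :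
    (let z : ℂ := Complex.exp (ωp * Complex.I)
     let num : ℂ := α * z ^ 2 + β * z + 1
     let den : ℂ := z ^ 2 + β * z + α
     let f' : ℂ := ((2 * α * z + β) * den - num * (2 * z + β)) / den ^ 2
     (Complex.I * z * f' / (num / den)).im) =
      (let z : ℂ := Complex.exp (ωp * Complex.I)
       let D : ℝ := ‖Complex.exp (2 * ωp * Complex.I) + β * z + α‖ ^ 2
       ((α * z ^ 2 + β * z + 1) / (z ^ 2 + β * z + α)).im * Real.cos ωp / Real.sin ωp +
         2 * Real.sin ωp ^ 2 * (α ^ 2 - 1) / D) := by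
  have hsin : Real.sin ωp ≠ 0 := (Real.sin_pos_of_pos_of_lt_pi hωp.1 hωp.2).ne'
  have hsq : cexp (2 * ωp * I) = cexp (ωp * I) ^ 2 := by
    rw [← Complex.exp_nat_mul, mul_assoc, Nat.cast_ofNat]
  have hz := norm_exp_ofReal_mul_I ωp
  dsimp only
  rw [hsq, ← normSq_eq_norm_sq] at hD ⊢
  have hden : cexp (ωp * I) ^ 2 + β * cexp (ωp * I) + α ≠ 0 := by simpa using hD
  rw [im_I_mul_logDeriv_allPass hz hden, im_allPass hz, exp_ofReal_mul_I_re, exp_ofReal_mul_I_im]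
  generalize normSq _ = D at hD ⊢
  field_simp
  linear_combination (1 - α ^ 2) * Real.sin_sq_add_cos_sq ωp
end
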